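/- Let n ≥ 1, let Σ be an n×n real symmetric positive semidefinite matrix and Ω an n×n real symmetric positive definite matrix. If X is an n×n real symmetric positive semidefinite matrix satisfying X Ω X = Σ, then X = Λ_kyle(Σ,Ω) = (√Ω)⁻¹ · √(√Ω Σ √Ω) · (√Ω)⁻¹. In particular, X ↦ Λ_kyle(Σ,Ω) is the unique symmetric positive semidefinite solution of X Ω X = Σ. -/

import Mathlib

open Matrix
open scoped Classical

/-- `sqrtm A` is the unique symmetric positive semidefinite square root of a
symmetric positive semidefinite real matrix `A` (junk value `0` otherwise). -/
noncomputable def sqrtm {n : ℕ} (A : Matrix (Fin n) (Fin n) ℝ) : Matrix (Fin n) (Fin n) ℝ :=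
  if h : A.PosSemidef then
    (h.1.eigenvectorUnitary : Matrix (Fin n) (Fin n) ℝ) * diagonal (Real.sqrt ∘ h.1.eigenvalues) *
      (star (h.1.eigenvectorUnitary : Matrix (Fin n) (Fin n) ℝ))
  else 0

/-- The Kyle cross-impact matrix `Λ_kyle(Σ,Ω) = (√Ω)⁻¹ √(√Ω Σ √Ω) (√Ω)⁻¹`. -/
noncomputable def kyle {n : ℕ} (S W : Matrix (Fin n) (Fin n) ℝ) : Matrix (Fin n) (Fin n) ℝ :=
  (sqrtm W)⁻¹ * sqrtm (sqrtm W * S * sqrtm W) * (sqrtm W)⁻¹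

open scoped MatrixOrder in
lemma sqrtm_eq_cfc_sqrt {n : ℕ} (A : Matrix (Fin n) (Fin n) ℝ) (h : A.PosSemidef) :
    sqrtm A = CFC.sqrt A := by
  rw [sqrtm, dif_pos h, CFC.sqrt_eq_cfc, cfc_nnreal_eq_real _ A, h.1.cfc_eq]
  simp only [IsHermitian.cfc, Unitary.conjStarAlgAut_apply, Real.coe_sqrt, Real.coe_toNNReal']
  congr 2
  ext i j
  simp [diagonal_apply, max_eq_left (h.eigenvalues_nonneg _)]

open scoped MatrixOrder in
/-- the Kyle matrix is the unique symmetric positive semidefinite solution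
of `X Ω X = Σ`. -/
theorem kyle_unique_posSemidef_solution {n : ℕ} (hn : 1 ≤ n)
    (S W X : Matrix (Fin n) (Fin n) ℝ) (hS : S.PosSemidef) (hW : W.PosDef)
    (hX : X.PosSemidef) (hXWX : X * W * X = S) :
    X = kyle S W := by
  have hWps := hW.posSemidef
  set R := CFC.sqrt W with hRdef
  have hR : R.PosSemidef := (CFC.sqrt_nonneg W).posSemidef
  have hRR : R * R = W := CFC.sqrt_mul_sqrt_self W hWps.nonneg
  have hRH : Rᴴ = R := hR.1
  -- R is invertible
  have hdet : R.det ≠ 0 := by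
    intro h
    have : W.det = 0 := by rw [← hRR, det_mul, h, mul_zero]
    exact hW.det_pos.ne' this
  have hUnit : IsUnit R := isUnit_iff_isUnit_det _ |>.2 hdet.isUnit
  -- R X R is PSD with square R S R
  have hRXR : (R * X * R).PosSemidef := by
    have := hX.conjTranspose_mul_mul_same R
    rwa [hRH] at this
  have hRSR : (R * S * R).PosSemidef := by
    have := hS.conjTranspose_mul_mul_same R
    rwa [hRH] at this
  have hsq : (R * X * R) ^ 2 = R * S * R := by
    rw [pow_two, ← hXWX, ← hRR]; noncomm_ring
  have key : R * X * R = CFC.sqrt (R * S * R) :=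
    (CFC.sqrt_unique (by rw [← pow_two, hsq]) hRXR.nonneg).symm
  -- unfold kyle
  have hsqW : sqrtm W = R := sqrtm_eq_cfc_sqrt W hWps
  have hsqRSR : sqrtm (R * S * R) = CFC.sqrt (R * S * R) := sqrtm_eq_cfc_sqrt _ hRSR
  rw [kyle, hsqW, hsqRSR, ← key]
  rw [Matrix.mul_assoc, Matrix.mul_assoc, Matrix.mul_nonsing_inv _ hdet.isUnit, Matrix.mul_one,
    ← Matrix.mul_assoc, Matrix.nonsing_inv_mul _ hdet.isUnit, Matrix.one_mul]
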